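/- Let ℓ_u, ℓ_r : ℝ^n → ℝ be convex, differentiable and G-smooth, with |ℓ_r(θ)| ≤ B for all θ. Let D > 0, t ≥ 1, let λ_0, …, λ_t ∈ [0, D], let β_0, …, β_{t−1} ≥ 0 and ε_0, …, ε_{t−1} ≥ 0 satisfy |λ_{i+1} − λ_i| ≤ β_i (G L + ε_i) for i = 0, …, t−1, and let α > 0 satisfy α (1 + D) G ≤ 1. Define C_λ(θ) = ℓ_u(θ) + λ ℓ_r(θ) and let θ_0, …, θ_t satisfy θ_{i+1} = θ_i − α ∇C_{λ_i}(θ_i). Suppose θ* minimizes θ ↦ Σ_{i=1}^{t} C_{λ_i}(θ) over ℝ^n and for each i, θ*_i minimizes C_{λ_i} over ℝ^n. Then Σ_{i=1}^{t} C_{λ_i}(θ_i) − Σ_{i=1}^{t} C_{λ_i}(θ*_i) ≤ B Σ_{i=0}^{t−1} β_i (G L + ε_i) + 2B Σ_{l=1}^{t−1} l β_l (G L + ε_l) + (1/(2α)) ‖θ_0 − θ*‖² + D B. -/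

import Mathlib

/-!
A gradient step on a convex, `K`-smooth function with `α K ≤ 1` satisfies the three-point
inequality `f(x - α∇f(x)) ≤ f(z) + (‖x - z‖² - ‖x - α∇f(x) - z‖²) / (2α)`. Applied to
`C_{λ_j}`, which is `(1 + D) G`-smooth, and summed over the steps it telescopes to the static
regret bound `‖θ₀ - θ*‖² / (2α)`, where `C_{λ_j}` is evaluated at `θ_{j+1}` rather than `θ_j`.

Everything else comes from `|ℓ_r| ≤ B`: changing the weight from `λ` to `λ'` changes `C` by at
most `B |λ - λ'|`. This pays for moving the weights forward by one index (first sum), for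
`λ_0` versus `λ_t` at `θ*` (the term `DB`), and for comparing `θ*` with the per-step minimizers:
`θ*` is no worse than `θ*_t`, and on `C_{λ_i}` the point `θ*_t` loses at most
`2B |λ_t - λ_i| ≤ 2B Σ_{l=i}^{t-1} β_l (GL + ε_l)` against `θ*_i`; summing over `i` counts each
`l` exactly `l` times.
-/

open scoped RealInnerProductSpace
open Finset

section SmoothConvex

variable {E : Type*} [NormedAddCommGroup E] [InnerProductSpace ℝ E] [CompleteSpace E]
  {f : E → ℝ} {g : E → E}

theorem hasDerivAt_comp_add_smul (hf : ∀ p, HasGradientAt f (g p) p) (x v : E) (s : ℝ) :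
    HasDerivAt (fun s : ℝ => f (x + s • v)) ⟪g (x + s • v), v⟫ s := by
  have hline : HasDerivAt (fun s : ℝ => x + s • v) v s := by
    simpa using ((hasDerivAt_id s).smul_const v).const_add x
  have h := (hf (x + s • v)).hasFDerivAt.comp_hasDerivAt s hline
  simpa [Function.comp_def] using h

theorem ConvexOn.add_inner_gradient_le (hc : ConvexOn ℝ Set.univ f)
    (hf : ∀ p, HasGradientAt f (g p) p) (x z : E) :
    f x + ⟪g x, z - x⟫ ≤ f z := by
  have hline : ConvexOn ℝ Set.univ (fun s : ℝ => f (x + s • (z - x))) := by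
    have hcomp : (fun s : ℝ => f (x + s • (z - x))) = f ∘ AffineMap.lineMap x z := by
      ext s
      simp [AffineMap.lineMap_apply_module', add_comm]
    simpa [hcomp] using hc.comp_affineMap (AffineMap.lineMap x z : ℝ →ᵃ[ℝ] E)
  have hslope := hline.le_slope_of_hasDerivAt (Set.mem_univ 0) (Set.mem_univ 1) one_pos
    (by simpa using hasDerivAt_comp_add_smul hf x (z - x) 0)
  simp only [slope_def_field, one_smul, add_sub_cancel, zero_smul, add_zero, sub_zero, div_one]
    at hslope
  linarith

theorem le_add_inner_gradient_add_sq {K : ℝ} (hf : ∀ p, HasGradientAt f (g p) p)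
    (hK : ∀ p q, ‖g p - g q‖ ≤ K * ‖p - q‖) (x z : E) :
    f z ≤ f x + ⟪g x, z - x⟫ + K / 2 * ‖z - x‖ ^ 2 := by
  set v := z - x
  -- `f` on the segment minus its quadratic model from `x`; the Lipschitz gradient makes it antitone
  let ψ : ℝ → ℝ := fun s => f (x + s • v) - s * ⟪g x, v⟫ - K / 2 * ‖v‖ ^ 2 * s ^ 2
  have hψ : ∀ s, HasDerivAt ψ (⟪g (x + s • v), v⟫ - ⟪g x, v⟫ - K * ‖v‖ ^ 2 * s) s := by
    intro s
    have hlin : HasDerivAt (fun s : ℝ => s * ⟪g x, v⟫) ⟪g x, v⟫ s := by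
      simpa using (hasDerivAt_id s).mul_const ⟪g x, v⟫
    have hquad : HasDerivAt (fun s : ℝ => K / 2 * ‖v‖ ^ 2 * s ^ 2) (K * ‖v‖ ^ 2 * s) s :=
      ((hasDerivAt_pow 2 s).const_mul (K / 2 * ‖v‖ ^ 2)).congr_deriv (by ring)
    exact ((hasDerivAt_comp_add_smul hf x v s).sub hlin).sub hquad
  have hanti : AntitoneOn ψ (Set.Ici 0) := by
    refine antitoneOn_of_hasDerivWithinAt_nonpos (convex_Ici 0)
      (fun s _ => (hψ s).continuousAt.continuousWithinAt) (fun s _ => (hψ s).hasDerivWithinAt) ?_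
    intro s hs
    rw [interior_Ici] at hs
    have hgrowth : ⟪g (x + s • v) - g x, v⟫ ≤ K * ‖v‖ ^ 2 * s :=
      calc ⟪g (x + s • v) - g x, v⟫ ≤ ‖g (x + s • v) - g x‖ * ‖v‖ := real_inner_le_norm _ _
        _ ≤ K * ‖x + s • v - x‖ * ‖v‖ := by gcongr; exact hK _ _
        _ = K * ‖v‖ ^ 2 * s := by
          rw [add_sub_cancel_left, norm_smul, Real.norm_of_nonneg hs.le]; ring
    rw [inner_sub_left] at hgrowth
    linarith
  have h := hanti Set.self_mem_Ici (Set.mem_Ici.2 zero_le_one) zero_le_one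
  simp only [ψ, zero_smul, add_zero, one_smul, zero_mul, one_mul, sub_zero, one_pow, mul_one,
    add_sub_cancel, v] at h
  linarith

theorem ConvexOn.gradient_step_le {K α : ℝ} (hc : ConvexOn ℝ Set.univ f)
    (hf : ∀ p, HasGradientAt f (g p) p) (hK : ∀ p q, ‖g p - g q‖ ≤ K * ‖p - q‖)
    (hα : 0 < α) (hαK : α * K ≤ 1) (x z : E) :
    f (x - α • g x) ≤ f z + (‖x - z‖ ^ 2 - ‖x - α • g x - z‖ ^ 2) / (2 * α) := by
  have hdescent := le_add_inner_gradient_add_sq hf hK x (x - α • g x)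
  have hconvex := hc.add_inner_gradient_le hf x z
  have hdist : ‖x - α • g x - z‖ ^ 2 = ‖x - z‖ ^ 2 - 2 * α * ⟪g x, x - z⟫ + α ^ 2 * ‖g x‖ ^ 2 := by
    rw [sub_right_comm, norm_sub_sq_real, real_inner_smul_right, norm_smul,
      Real.norm_of_nonneg hα.le, real_inner_comm]
    ring
  have hsmall : K / 2 * ‖α • g x‖ ^ 2 ≤ α / 2 * ‖g x‖ ^ 2 := by
    rw [norm_smul, Real.norm_of_nonneg hα.le]
    nlinarith [sq_nonneg ‖g x‖]
  rw [sub_sub_cancel_left, norm_neg, inner_neg_right, real_inner_smul_right,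
    real_inner_self_eq_norm_sq] at hdescent
  rw [← neg_sub, inner_neg_right] at hconvex
  have hgain : (‖x - z‖ ^ 2 - ‖x - α • g x - z‖ ^ 2) / (2 * α)
      = ⟪g x, x - z⟫ - α / 2 * ‖g x‖ ^ 2 := by
    rw [hdist]; field_simp; ring
  linarith

theorem gradientDescent_regret_le {f : ℕ → E → ℝ} {g : ℕ → E → E} {K α : ℝ} {x : ℕ → E} {t : ℕ}
    (hc : ∀ j < t, ConvexOn ℝ Set.univ (f j)) (hf : ∀ j < t, ∀ p, HasGradientAt (f j) (g j p) p)
    (hK : ∀ j < t, ∀ p q, ‖g j p - g j q‖ ≤ K * ‖p - q‖) (hα : 0 < α) (hαK : α * K ≤ 1)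
    (hx : ∀ j < t, x (j + 1) = x j - α • g j (x j)) (z : E) :
    ∑ j ∈ range t, (f j (x (j + 1)) - f j z) ≤ 1 / (2 * α) * ‖x 0 - z‖ ^ 2 := by
  calc ∑ j ∈ range t, (f j (x (j + 1)) - f j z)
      ≤ ∑ j ∈ range t, (‖x j - z‖ ^ 2 / (2 * α) - ‖x (j + 1) - z‖ ^ 2 / (2 * α)) := by
        refine sum_le_sum fun j hj => ?_
        have hjt := mem_range.1 hj
        have := (hc j hjt).gradient_step_le (hf j hjt) (hK j hjt) hα hαK (x j) z
        rw [← hx j hjt] at this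
        linarith [sub_div (‖x j - z‖ ^ 2) (‖x (j + 1) - z‖ ^ 2) (2 * α)]
    _ = ‖x 0 - z‖ ^ 2 / (2 * α) - ‖x t - z‖ ^ 2 / (2 * α) :=
        sum_range_sub' (fun j => ‖x j - z‖ ^ 2 / (2 * α)) t
    _ ≤ 1 / (2 * α) * ‖x 0 - z‖ ^ 2 := by
        rw [one_div_mul_eq_div]
        linarith [div_nonneg (sq_nonneg ‖x t - z‖) (by positivity : (0 : ℝ) ≤ 2 * α)]

end SmoothConvex

theorem sum_Icc_one_eq_sum_range {M : Type*} [AddCommMonoid M] (f : ℕ → M) (t : ℕ) :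
    ∑ i ∈ Icc 1 t, f i = ∑ j ∈ range t, f (j + 1) := by
  rw [range_eq_Ico, sum_Ico_add', zero_add, Ico_add_one_right_eq_Icc]

theorem sum_Icc_one_sum_Ico_eq {R : Type*} [CommSemiring R] (c : ℕ → R) (t : ℕ) :
    ∑ i ∈ Icc 1 t, ∑ l ∈ Ico i t, c l = ∑ l ∈ Icc 1 (t - 1), (l : R) * c l := by
  have hIco : Ico 1 t = Icc 1 (t - 1) := by ext; simp only [mem_Ico, mem_Icc]; omega
  rw [sum_comm' (t' := Ico 1 t) (s' := fun l => Icc 1 l)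
    (by intros; simp only [mem_Icc, mem_Ico]; omega), hIco]
  simp [sum_const, Nat.card_Icc, nsmul_eq_mul]

section CompositeLoss

variable {E : Type*} (ℓu ℓr : E → ℝ)

def compositeLoss (w : ℝ) (x : E) : ℝ := ℓu x + w * ℓr x

theorem compositeLoss_apply (w : ℝ) (x : E) : compositeLoss ℓu ℓr w x = ℓu x + w * ℓr x := rfl

theorem compositeLoss_sub_compositeLoss (w w' : ℝ) (x : E) :
    compositeLoss ℓu ℓr w x - compositeLoss ℓu ℓr w' x = (w - w') * ℓr x := by
  simp only [compositeLoss]; ring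

variable {ℓu ℓr} {B : ℝ}

theorem convexOn_compositeLoss [AddCommGroup E] [Module ℝ E] (hu : ConvexOn ℝ Set.univ ℓu)
    (hr : ConvexOn ℝ Set.univ ℓr) {w : ℝ} (hw : 0 ≤ w) :
    ConvexOn ℝ Set.univ (compositeLoss ℓu ℓr w) :=
  hu.add (hr.smul hw)

theorem compositeLoss_sub_compositeLoss_le (hB : ∀ x, |ℓr x| ≤ B) (w w' : ℝ) (x : E) :
    compositeLoss ℓu ℓr w x - compositeLoss ℓu ℓr w' x ≤ |w - w'| * B := by
  rw [compositeLoss_sub_compositeLoss]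
  exact (le_abs_self _).trans (by rw [abs_mul]; gcongr; exact hB x)

theorem compositeLoss_sub_le_of_minimizer (hB : ∀ x, |ℓr x| ≤ B) {s : ℝ} {y : E}
    (hy : ∀ x, compositeLoss ℓu ℓr s y ≤ compositeLoss ℓu ℓr s x) (w : ℝ) (x : E) :
    compositeLoss ℓu ℓr w y - compositeLoss ℓu ℓr w x ≤ 2 * B * |s - w| := by
  have hy' := compositeLoss_sub_compositeLoss_le (ℓu := ℓu) hB w s y
  have hx' := compositeLoss_sub_compositeLoss_le (ℓu := ℓu) hB s w x
  rw [abs_sub_comm] at hy'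
  linarith [hy x]

variable {lam c : ℕ → ℝ} {t : ℕ}

theorem sum_Icc_compositeLoss_le (hB : ∀ x, |ℓr x| ≤ B) (x : ℕ → E)
    (hlam : ∀ j < t, |lam (j + 1) - lam j| ≤ c j) :
    ∑ i ∈ Icc 1 t, compositeLoss ℓu ℓr (lam i) (x i)
      ≤ ∑ j ∈ range t, compositeLoss ℓu ℓr (lam j) (x (j + 1)) + B * ∑ j ∈ range t, c j := by
  rw [sum_Icc_one_eq_sum_range, mul_sum, ← sum_add_distrib]
  refine sum_le_sum fun j hj => ?_
  have hvar := compositeLoss_sub_compositeLoss_le (ℓu := ℓu) hB (lam (j + 1)) (lam j) (x (j + 1))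
  have hB0 : 0 ≤ B := (abs_nonneg _).trans (hB (x 0))
  linarith [mul_le_mul_of_nonneg_right (hlam j (mem_range.1 hj)) hB0]

theorem sum_range_compositeLoss_le {D : ℝ} (hB : ∀ x, |ℓr x| ≤ B) (h0 : lam 0 ∈ Set.Icc 0 D)
    (ht : lam t ∈ Set.Icc 0 D) (x : E) :
    ∑ j ∈ range t, compositeLoss ℓu ℓr (lam j) x
      ≤ ∑ i ∈ Icc 1 t, compositeLoss ℓu ℓr (lam i) x + D * B := by
  have htel : ∑ j ∈ range t, compositeLoss ℓu ℓr (lam j) x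
      - ∑ j ∈ range t, compositeLoss ℓu ℓr (lam (j + 1)) x = (lam 0 - lam t) * ℓr x := by
    rw [← sum_sub_distrib, sum_range_sub' (fun j => compositeLoss ℓu ℓr (lam j) x),
      compositeLoss_sub_compositeLoss]
  have hvar := compositeLoss_sub_compositeLoss_le (ℓu := ℓu) hB (lam 0) (lam t) x
  have hD : |lam 0 - lam t| ≤ D := abs_sub_le_of_nonneg_of_le h0.1 h0.2 ht.1 ht.2
  rw [compositeLoss_sub_compositeLoss] at hvar
  rw [sum_Icc_one_eq_sum_range]
  linarith [mul_le_mul_of_nonneg_right hD ((abs_nonneg _).trans (hB x))]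

theorem sum_compositeLoss_sub_minimizers_le (hB : ∀ x, |ℓr x| ≤ B)
    (hlam : ∀ j < t, |lam (j + 1) - lam j| ≤ c j) {y : ℕ → E}
    (hy : ∀ i, 1 ≤ i → i ≤ t → ∀ x, compositeLoss ℓu ℓr (lam i) (y i)
      ≤ compositeLoss ℓu ℓr (lam i) x) :
    ∑ i ∈ Icc 1 t, (compositeLoss ℓu ℓr (lam i) (y t) - compositeLoss ℓu ℓr (lam i) (y i))
      ≤ 2 * B * ∑ l ∈ Icc 1 (t - 1), (l : ℝ) * c l := by
  have hB0 : 0 ≤ B := (abs_nonneg _).trans (hB (y 0))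
  rw [← sum_Icc_one_sum_Ico_eq, mul_sum]
  refine sum_le_sum fun i hi => ?_
  obtain ⟨h1i, hit⟩ := mem_Icc.1 hi
  have hvar : |lam t - lam i| ≤ ∑ l ∈ Ico i t, c l := by
    rw [abs_sub_comm, ← Real.dist_eq]
    exact dist_le_Ico_sum_of_dist_le hit fun _ hk => by
      rw [Real.dist_eq, abs_sub_comm]; exact hlam _ hk
  calc _ ≤ 2 * B * |lam t - lam i| :=
        compositeLoss_sub_le_of_minimizer hB (hy t (h1i.trans hit) le_rfl) _ _
    _ ≤ 2 * B * ∑ l ∈ Ico i t, c l := by gcongr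

end CompositeLoss

theorem hasGradientAt_compositeLoss {E : Type*} [NormedAddCommGroup E] [InnerProductSpace ℝ E]
    [CompleteSpace E] {ℓu ℓr : E → ℝ} {gu gr : E → E} (hu : ∀ x, HasGradientAt ℓu (gu x) x)
    (hr : ∀ x, HasGradientAt ℓr (gr x) x) (w : ℝ) (x : E) :
    HasGradientAt (compositeLoss ℓu ℓr w) (gu x + w • gr x) x := by
  rw [hasGradientAt_iff_hasFDerivAt, map_add, map_smul]
  exact (hu x).hasFDerivAt.add ((hr x).hasFDerivAt.const_mul w)

theorem norm_add_smul_sub_add_smul_le {E F : Type*} [SeminormedAddCommGroup E]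
    [SeminormedAddCommGroup F] [NormedSpace ℝ F] {gu gr : E → F} {G D w : ℝ}
    (hGu : ∀ x y, ‖gu x - gu y‖ ≤ G * ‖x - y‖) (hGr : ∀ x y, ‖gr x - gr y‖ ≤ G * ‖x - y‖)
    (hw : w ∈ Set.Icc 0 D) (x y : E) :
    ‖(gu x + w • gr x) - (gu y + w • gr y)‖ ≤ (1 + D) * G * ‖x - y‖ :=
  calc ‖(gu x + w • gr x) - (gu y + w • gr y)‖ = ‖(gu x - gu y) + w • (gr x - gr y)‖ := by
        rw [smul_sub, add_sub_add_comm]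
    _ ≤ ‖gu x - gu y‖ + w * ‖gr x - gr y‖ := by
        grw [norm_add_le, norm_smul, Real.norm_of_nonneg hw.1]
    _ ≤ G * ‖x - y‖ + D * (G * ‖x - y‖) :=
        add_le_add (hGu x y) (mul_le_mul hw.2 (hGr x y) (norm_nonneg _) (hw.1.trans hw.2))
    _ = (1 + D) * G * ‖x - y‖ := by ring

theorem eupmu_dynamic_regret_general {n : ℕ}
    (ℓu ℓr : EuclideanSpace ℝ (Fin n) → ℝ)
    (gu gr : EuclideanSpace ℝ (Fin n) → EuclideanSpace ℝ (Fin n))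
    (G L B D : ℝ)
    (hcu : ConvexOn ℝ Set.univ ℓu) (hcr : ConvexOn ℝ Set.univ ℓr)
    (hu : ∀ x, HasGradientAt ℓu (gu x) x)
    (hr : ∀ x, HasGradientAt ℓr (gr x) x)
    (hGu : ∀ x y, ‖gu x - gu y‖ ≤ G * ‖x - y‖)
    (hGr : ∀ x y, ‖gr x - gr y‖ ≤ G * ‖x - y‖)
    (hB : ∀ x, |ℓr x| ≤ B)
    (t : ℕ) (lam β ε : ℕ → ℝ)
    (hlam : ∀ i ≤ t, lam i ∈ Set.Icc (0 : ℝ) D)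
    (hlamstep : ∀ i < t, |lam (i + 1) - lam i| ≤ β i * (G * L + ε i))
    (α : ℝ) (hα : 0 < α) (hαG : α * (1 + D) * G ≤ 1)
    (θ : ℕ → EuclideanSpace ℝ (Fin n))
    (hupd : ∀ i < t, θ (i + 1) = θ i - α • (gu (θ i) + lam i • gr (θ i)))
    (θstar : EuclideanSpace ℝ (Fin n))
    (hstar : ∀ θ' : EuclideanSpace ℝ (Fin n),
      ∑ i ∈ Finset.Icc 1 t, (ℓu θstar + lam i * ℓr θstar)
        ≤ ∑ i ∈ Finset.Icc 1 t, (ℓu θ' + lam i * ℓr θ'))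
    (θi : ℕ → EuclideanSpace ℝ (Fin n))
    (hi : ∀ i, 1 ≤ i → i ≤ t → ∀ θ' : EuclideanSpace ℝ (Fin n),
      ℓu (θi i) + lam i * ℓr (θi i) ≤ ℓu θ' + lam i * ℓr θ') :
    ∑ i ∈ Finset.Icc 1 t, (ℓu (θ i) + lam i * ℓr (θ i))
        - ∑ i ∈ Finset.Icc 1 t, (ℓu (θi i) + lam i * ℓr (θi i))
      ≤ B * ∑ i ∈ Finset.range t, β i * (G * L + ε i)
        + 2 * B * ∑ l ∈ Finset.Icc 1 (t - 1), (l : ℝ) * (β l * (G * L + ε l))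
        + (1 / (2 * α)) * ‖θ 0 - θstar‖ ^ 2 + D * B := by
  simp only [← compositeLoss_apply ℓu ℓr] at hstar hi ⊢
  have hstatic := gradientDescent_regret_le (f := fun j => compositeLoss ℓu ℓr (lam j))
    (fun j hj => convexOn_compositeLoss hcu hcr (hlam j hj.le).1)
    (fun j _ => hasGradientAt_compositeLoss hu hr (lam j))
    (fun j hj => norm_add_smul_sub_add_smul_le hGu hGr (hlam j hj.le)) hα
    (by rwa [← mul_assoc]) hupd θstar
  have hshift := sum_Icc_compositeLoss_le (ℓu := ℓu) hB θ hlamstep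
  have hdrift :=
    sum_range_compositeLoss_le (ℓu := ℓu) hB (hlam 0 t.zero_le) (hlam t le_rfl) θstar
  have hcomparator := sum_compositeLoss_sub_minimizers_le hB hlamstep hi
  rw [sum_sub_distrib] at hstatic hcomparator
  linarith [hstar (θi t)]

/-- Explicit dynamic-regret form of the paper's Theorem 2
(Pareto optimality): under the hypotheses of the static-regret lemma, and with
`θ*` a minimizer of `Σ_i C_{λ_i}` and `θ*_i` per-step minimizers of `C_{λ_i}`
(where `C_λ = ℓ_u + λ ℓ_r`), one has
`Σ_{i=1}^t C_{λ_i}(θ_i) − Σ_{i=1}^t C_{λ_i}(θ*_i)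
  ≤ B Σ_{i=0}^{t−1} β_i(GL + ε_i) + 2B Σ_{l=1}^{t−1} l β_l(GL + ε_l)
    + ‖θ_0 − θ*‖²/(2α) + DB`. -/
theorem eupmu_dynamic_regret {n : ℕ}
    (ℓu ℓr : EuclideanSpace ℝ (Fin n) → ℝ)
    (gu gr : EuclideanSpace ℝ (Fin n) → EuclideanSpace ℝ (Fin n))
    (G L B D : ℝ) (hD : 0 < D)
    (hcu : ConvexOn ℝ Set.univ ℓu) (hcr : ConvexOn ℝ Set.univ ℓr)
    (hu : ∀ x, HasGradientAt ℓu (gu x) x)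
    (hr : ∀ x, HasGradientAt ℓr (gr x) x)
    (hGu : ∀ x y, ‖gu x - gu y‖ ≤ G * ‖x - y‖)
    (hGr : ∀ x y, ‖gr x - gr y‖ ≤ G * ‖x - y‖)
    (hB : ∀ x, |ℓr x| ≤ B)
    (t : ℕ) (ht : 1 ≤ t) (lam β ε : ℕ → ℝ)
    (hlam : ∀ i ≤ t, lam i ∈ Set.Icc (0 : ℝ) D)
    (hβ : ∀ i < t, 0 ≤ β i) (hε : ∀ i < t, 0 ≤ ε i)
    (hlamstep : ∀ i < t, |lam (i + 1) - lam i| ≤ β i * (G * L + ε i))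
    (α : ℝ) (hα : 0 < α) (hαG : α * (1 + D) * G ≤ 1)
    (θ : ℕ → EuclideanSpace ℝ (Fin n))
    (hupd : ∀ i < t, θ (i + 1) = θ i - α • (gu (θ i) + lam i • gr (θ i)))
    (θstar : EuclideanSpace ℝ (Fin n))
    (hstar : ∀ θ' : EuclideanSpace ℝ (Fin n),
      ∑ i ∈ Finset.Icc 1 t, (ℓu θstar + lam i * ℓr θstar)
        ≤ ∑ i ∈ Finset.Icc 1 t, (ℓu θ' + lam i * ℓr θ'))
    (θi : ℕ → EuclideanSpace ℝ (Fin n))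
    (hi : ∀ i, 1 ≤ i → i ≤ t → ∀ θ' : EuclideanSpace ℝ (Fin n),
      ℓu (θi i) + lam i * ℓr (θi i) ≤ ℓu θ' + lam i * ℓr θ') :
    ∑ i ∈ Finset.Icc 1 t, (ℓu (θ i) + lam i * ℓr (θ i))
        - ∑ i ∈ Finset.Icc 1 t, (ℓu (θi i) + lam i * ℓr (θi i))
      ≤ B * ∑ i ∈ Finset.range t, β i * (G * L + ε i)
        + 2 * B * ∑ l ∈ Finset.Icc 1 (t - 1), (l : ℝ) * (β l * (G * L + ε l))
        + (1 / (2 * α)) * ‖θ 0 - θstar‖ ^ 2 + D * B :=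
  eupmu_dynamic_regret_general ℓu ℓr gu gr G L B D hcu hcr hu hr hGu hGr hB t lam β ε hlam hlamstep
    α hα hαG θ hupd θstar hstar θi hi
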